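/- arXiv:2205.14482 — 2 statements merged into one kernel-verified Lean document; each statement's English description precedes it below -/
import Mathlib

section
/- Let N ≥ 6 and set B₁ = (2/(2π)^{N−2}) ∑_{i=1}^∞ i^{−(N−2)}. With x̄_j as the vertices of a regular k-gon setup (|x̄_1 − x̄_j| = 2r√(1−h²) sin((j−1)π/k)), one has ∑_{j=2}^k |x̄_1 − x̄_j|^{−(N−2)} = (k/(r√(1−h²)))^{N−2} (B₁ + O(1/k²)) as k → ∞, uniformly for 0 ≤ h ≤ 1/2; i.e., there exists C > 0 independent of k, r, h such that | ∑_{j=2}^k (2r√(1−h²) sin((j−1)π/k))^{−(N−2)} − B₁ (k/(r√(1−h²)))^{N−2} | ≤ C (k/(r√(1−h²)))^{N−2} / k². -/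
/-!
Write `n = N - 2` and `k = 2K + 2`, and factor out `(2 r √(1 - h²))⁻ⁿ`. Since
`sin θ = sin (π - θ)`, the sum of `(sin θ_j)⁻ⁿ` over `θ_j = jπ/k`, `0 < j < k`, is twice the
sum over `0 < j ≤ K` plus the middle term `1` at `j = K + 1`. For `0 < θ ≤ π/2` the cubic bound
`sin θ ≥ θ - θ³/6` together with Jordan's inequality `sin θ ≥ 2θ/π` gives
`0 ≤ (sin θ)⁻ⁿ - θ⁻ⁿ ≤ n (π/2)ⁿ θ²⁻ⁿ`, and replacing every `sin θ_j` by `θ_j` turns the sum into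
the main term `2 (k/π)ⁿ ζ(n)` minus its tail over `j ≥ K + 1`. On that tail `θ_j ≥ π/2 ≥ 1`, so
`θ_j⁻ⁿ ≤ θ_j²⁻ⁿ`. Both errors are therefore bounded by `∑_j θ_j²⁻ⁿ = (k/π)ⁿ⁻² ζ(n - 2)`,
which is `O(kⁿ⁻²)` because `n ≥ 4`.
-/

open Real Finset

lemma inv_pow_le_inv_sin_pow {θ : ℝ} (h0 : 0 < θ) (hπ : θ < π) (n : ℕ) :
    (θ ^ n)⁻¹ ≤ (sin θ ^ n)⁻¹ :=
  inv_anti₀ (pow_pos (sin_pos_of_pos_of_lt_pi h0 hπ) n)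
    (pow_le_pow_left₀ (sin_pos_of_pos_of_lt_pi h0 hπ).le (sin_le h0.le) n)

lemma inv_sin_pow_sub_inv_pow_le {θ : ℝ} (h0 : 0 < θ) (hπ : θ ≤ π / 2) {n : ℕ} (hn : 2 ≤ n) :
    (sin θ ^ n)⁻¹ - (θ ^ n)⁻¹ ≤ n * (π / 2) ^ n * (θ ^ (n - 2))⁻¹ := by
  obtain ⟨m, rfl⟩ : ∃ m, n = m + 2 := ⟨n - 2, by omega⟩
  have hsin : 0 < sin θ := sin_pos_of_pos_of_lt_pi h0 (by linarith [pi_pos])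
  have hba : θ⁻¹ ≤ (sin θ)⁻¹ := inv_anti₀ hsin (sin_le h0.le)
  have hb : 0 ≤ θ⁻¹ := by positivity
  have hsub : (sin θ)⁻¹ - θ⁻¹ ≤ θ ^ 2 * (sin θ)⁻¹ := by
    have hcube : θ - sin θ ≤ θ ^ 3 := by nlinarith [sin_ge_sub_cube h0.le, pow_pos h0 3]
    rw [inv_sub_inv hsin.ne' h0.ne', div_le_iff₀ (by positivity)]
    calc θ - sin θ ≤ θ ^ 3 := hcube
      _ = θ ^ 2 * (sin θ)⁻¹ * (sin θ * θ) := by field_simp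
  have hjordan : (sin θ)⁻¹ ≤ π / 2 * θ⁻¹ :=
    calc (sin θ)⁻¹ ≤ (2 / π * θ)⁻¹ := inv_anti₀ (by positivity) (mul_le_sin h0.le hπ)
      _ = π / 2 * θ⁻¹ := by field_simp
  have hmvt : (sin θ)⁻¹ ^ (m + 2) - θ⁻¹ ^ (m + 2)
      ≤ ((sin θ)⁻¹ - θ⁻¹) * (m + 2 : ℕ) * (sin θ)⁻¹ ^ (m + 1) := by
    have := abs_pow_sub_pow_le (sin θ)⁻¹ θ⁻¹ (m + 2)
    rwa [abs_of_nonneg (sub_nonneg.2 (pow_le_pow_left₀ hb hba _)),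
      abs_of_nonneg (sub_nonneg.2 hba), abs_of_nonneg hb, abs_of_nonneg (hb.trans hba),
      max_eq_left hba] at this
  calc (sin θ ^ (m + 2))⁻¹ - (θ ^ (m + 2))⁻¹ = (sin θ)⁻¹ ^ (m + 2) - θ⁻¹ ^ (m + 2) := by
        rw [inv_pow, inv_pow]
    _ ≤ θ ^ 2 * (sin θ)⁻¹ * (m + 2 : ℕ) * (sin θ)⁻¹ ^ (m + 1) := by
        refine hmvt.trans ?_
        gcongr
    _ = (m + 2 : ℕ) * θ ^ 2 * (sin θ)⁻¹ ^ (m + 2) := by ring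
    _ ≤ (m + 2 : ℕ) * θ ^ 2 * (π / 2 * θ⁻¹) ^ (m + 2) := by gcongr
    _ = (m + 2 : ℕ) * (π / 2) ^ (m + 2) * (θ ^ (m + 2 - 2))⁻¹ := by
        rw [Nat.add_sub_cancel, mul_pow, inv_pow, pow_add θ m 2]
        field_simp

theorem sum_range_two_mul_add_one_of_symm {M : Type*} [AddCommMonoid M] (f : ℕ → M) (K : ℕ)
    (hf : ∀ i ≤ 2 * K, f (2 * K - i) = f i) :
    ∑ i ∈ range (2 * K + 1), f i = 2 • ∑ i ∈ range K, f i + f K := by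
  rw [show 2 * K + 1 = K + 1 + K by ring, sum_range_add, sum_range_succ, two_nsmul,
    ← sum_range_reflect (fun i ↦ f (K + 1 + i))]
  have hrefl : ∀ i ∈ range K, f (K + 1 + (K - 1 - i)) = f i := fun i hi ↦ by
    have hiK := mem_range.1 hi
    rw [← hf i (by omega)]
    congr 1
    omega
  rw [sum_congr rfl hrefl]
  abel

lemma summable_inv_nat_add_one_pow {p : ℕ} (hp : 1 < p) :
    Summable fun i : ℕ ↦ (((i : ℝ) + 1) ^ p)⁻¹ := by
  have := (summable_nat_add_iff 1).2 (Real.summable_nat_pow_inv.2 hp)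
  exact_mod_cast this

/-- The angle `(j - 1) π / k` of the theorem, for `k = 2 K + 2` and `j = i + 2`. -/
noncomputable def vertexAngle (K i : ℕ) : ℝ := (i + 1) * π / (2 * K + 2)

lemma vertexAngle_pos (K i : ℕ) : 0 < vertexAngle K i := by
  unfold vertexAngle; positivity

lemma vertexAngle_lt_pi {K i : ℕ} (hi : i ≤ 2 * K) : vertexAngle K i < π := by
  have : (i : ℝ) ≤ 2 * K := by exact_mod_cast hi
  unfold vertexAngle
  rw [div_lt_iff₀ (by positivity)]
  nlinarith [pi_pos]

lemma vertexAngle_le_half_pi {K i : ℕ} (hi : i ≤ K) : vertexAngle K i ≤ π / 2 := by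
  have : (i : ℝ) ≤ K := by exact_mod_cast hi
  unfold vertexAngle
  rw [div_le_div_iff₀ (by positivity) two_pos]
  nlinarith [pi_pos]

lemma vertexAngle_self (K : ℕ) : vertexAngle K K = π / 2 := by
  unfold vertexAngle; field_simp

lemma one_le_vertexAngle {K i : ℕ} (hi : K ≤ i) : 1 ≤ vertexAngle K i := by
  have : (K : ℝ) ≤ i := by exact_mod_cast hi
  unfold vertexAngle
  rw [le_div_iff₀ (by positivity)]
  nlinarith [pi_gt_three]

lemma sin_vertexAngle_reflect {K i : ℕ} (hi : i ≤ 2 * K) :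
    sin (vertexAngle K (2 * K - i)) = sin (vertexAngle K i) := by
  have : vertexAngle K (2 * K - i) = π - vertexAngle K i := by
    unfold vertexAngle
    rw [Nat.cast_sub hi]
    field_simp
    push_cast
    ring
  rw [this, sin_pi_sub]

lemma sum_Icc_two_eq_sum_range_vertexAngle {M : Type*} [AddCommMonoid M] (K : ℕ)
    (f : ℝ → M) :
    ∑ j ∈ Icc 2 (2 * K + 2), f (((j : ℝ) - 1) * π / ((2 * K + 2 : ℕ) : ℝ))
      = ∑ i ∈ range (2 * K + 1), f (vertexAngle K i) := by
  rw [← Ico_add_one_right_eq_Icc, sum_Ico_eq_sum_range,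
    show 2 * K + 2 + 1 - 2 = 2 * K + 1 by omega]
  refine sum_congr rfl fun i _ ↦ congr_arg f ?_
  unfold vertexAngle
  push_cast
  ring

lemma inv_vertexAngle_pow (K i p : ℕ) :
    (vertexAngle K i ^ p)⁻¹ = ((2 * K + 2) / π) ^ p * (((i : ℝ) + 1) ^ p)⁻¹ := by
  unfold vertexAngle
  rw [div_pow, div_pow, mul_pow]
  field_simp

lemma summable_inv_vertexAngle_pow (K : ℕ) {p : ℕ} (hp : 1 < p) :
    Summable fun i ↦ (vertexAngle K i ^ p)⁻¹ := by
  simpa only [inv_vertexAngle_pow] using (summable_inv_nat_add_one_pow hp).mul_left _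

lemma tsum_inv_vertexAngle_pow (K p : ℕ) :
    ∑' i, (vertexAngle K i ^ p)⁻¹ = ((2 * K + 2) / π) ^ p * ∑' i : ℕ, (((i : ℝ) + 1) ^ p)⁻¹ := by
  simp only [inv_vertexAngle_pow, tsum_mul_left]

theorem abs_sum_inv_sin_vertexAngle_pow_sub_le {n : ℕ} (hn : 4 ≤ n) (K : ℕ) :
    |∑ i ∈ range (2 * K + 1), (sin (vertexAngle K i) ^ n)⁻¹ - 2 * ∑' i, (vertexAngle K i ^ n)⁻¹|
      ≤ 2 * (n * (π / 2) ^ n) * ∑' i, (vertexAngle K i ^ (n - 2))⁻¹ + 1 := by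
  set s := fun i ↦ (sin (vertexAngle K i) ^ n)⁻¹
  set t := fun i ↦ (vertexAngle K i ^ n)⁻¹
  set w := fun i ↦ (vertexAngle K i ^ (n - 2))⁻¹
  set c := n * (π / 2) ^ n
  have hc : 1 ≤ c := one_le_mul_of_one_le_of_one_le (by norm_cast; omega)
    (one_le_pow₀ (by linarith [pi_gt_three]))
  have hsum_s : ∑ i ∈ range (2 * K + 1), s i = 2 * ∑ i ∈ range K, s i + 1 := by
    rw [sum_range_two_mul_add_one_of_symm s K
      fun i hi ↦ by simp only [s, sin_vertexAngle_reflect hi], nsmul_eq_mul]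
    simp [s, vertexAngle_self]
  have hnonneg : ∀ i p, 0 ≤ (vertexAngle K i ^ p)⁻¹ := fun i p ↦
    inv_nonneg.2 (pow_nonneg (vertexAngle_pos K i).le p)
  have ht : Summable t := summable_inv_vertexAngle_pow K (by omega)
  have hw : Summable w := summable_inv_vertexAngle_pow K (by omega)
  have hst : ∀ i ∈ range K, 0 ≤ s i - t i ∧ s i - t i ≤ c * w i := fun i hi ↦ by
    have hiK := mem_range.1 hi
    exact ⟨sub_nonneg.2
        (inv_pow_le_inv_sin_pow (vertexAngle_pos K i) (vertexAngle_lt_pi (by omega)) n),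
      inv_sin_pow_sub_inv_pow_le (vertexAngle_pos K i) (vertexAngle_le_half_pi hiK.le) (by omega)⟩
  have htail : ∀ i, t (i + K) ≤ w (i + K) := fun i ↦
    inv_anti₀ (pow_pos (vertexAngle_pos K _) _)
      (pow_le_pow_right₀ (one_le_vertexAngle (Nat.le_add_left K i)) (Nat.sub_le n 2))
  have hE0 : 0 ≤ ∑ i ∈ range K, (s i - t i) := sum_nonneg fun i hi ↦ (hst i hi).1
  have hE : ∑ i ∈ range K, (s i - t i) ≤ c * ∑ i ∈ range K, w i := by
    rw [mul_sum]; exact sum_le_sum fun i hi ↦ (hst i hi).2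
  have hT0 : 0 ≤ ∑' i, t (i + K) := tsum_nonneg fun i ↦ hnonneg _ _
  have hT : ∑' i, t (i + K) ≤ ∑' i, w (i + K) :=
    Summable.tsum_le_tsum htail ((summable_nat_add_iff K).2 ht) ((summable_nat_add_iff K).2 hw)
  have hW0 : 0 ≤ ∑ i ∈ range K, w i := sum_nonneg fun i _ ↦ hnonneg _ _
  have hW0' : 0 ≤ ∑' i, w (i + K) := tsum_nonneg fun i ↦ hnonneg _ _
  have key : ∑ i ∈ range (2 * K + 1), s i - 2 * ∑' i, t i
      = 2 * ∑ i ∈ range K, (s i - t i) + 1 - 2 * ∑' i, t (i + K) := by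
    rw [hsum_s, ← ht.sum_add_tsum_nat_add K, sum_sub_distrib]; ring
  rw [key, ← hw.sum_add_tsum_nat_add K, abs_le]
  constructor <;> nlinarith

theorem abs_sum_inv_sin_vertexAngle_pow_sub_le_mul {n : ℕ} (hn : 4 ≤ n) (K : ℕ) :
    |∑ i ∈ range (2 * K + 1), (sin (vertexAngle K i) ^ n)⁻¹
        - 2 * ((2 * K + 2) / π) ^ n * ∑' i : ℕ, (((i : ℝ) + 1) ^ n)⁻¹|
      ≤ (2 * (n * (π / 2) ^ n) * ∑' i : ℕ, (((i : ℝ) + 1) ^ (n - 2))⁻¹ + 1)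
          * (2 * K + 2) ^ (n - 2) := by
  rw [mul_assoc, ← tsum_inv_vertexAngle_pow]
  refine (abs_sum_inv_sin_vertexAngle_pow_sub_le hn K).trans ?_
  rw [tsum_inv_vertexAngle_pow]
  set ζ := ∑' i : ℕ, (((i : ℝ) + 1) ^ (n - 2))⁻¹
  set k : ℝ := 2 * K + 2
  have hk : 1 ≤ k := by simp only [k]; linarith [(Nat.cast_nonneg K : (0 : ℝ) ≤ K)]
  have hζ : 0 ≤ ζ := tsum_nonneg fun i ↦ by positivity
  have hscale : (k / π) ^ (n - 2) ≤ k ^ (n - 2) :=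
    pow_le_pow_left₀ (by positivity) (div_le_self (by positivity) (by linarith [pi_gt_three])) _
  calc 2 * (n * (π / 2) ^ n) * ((k / π) ^ (n - 2) * ζ) + 1
      ≤ 2 * (n * (π / 2) ^ n) * (k ^ (n - 2) * ζ) + k ^ (n - 2) := by
        gcongr
        exact one_le_pow₀ hk
    _ = _ := by ring

/-- `2 a sin θ` is the chord length `|x̄₁ - x̄ⱼ|` for `a = r √(1 - h²)`. -/
theorem abs_sum_inv_chord_pow_sub_le {n : ℕ} (hn : 4 ≤ n) (K : ℕ) {a : ℝ} (ha : 0 < a) :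
    |∑ i ∈ range (2 * K + 1), ((2 * a * sin (vertexAngle K i)) ^ n)⁻¹
        - (2 / (2 * π) ^ n * ∑' i : ℕ, (((i : ℝ) + 1) ^ n)⁻¹) * ((2 * K + 2) / a) ^ n|
      ≤ (2 * (n * (π / 2) ^ n) * ∑' i : ℕ, (((i : ℝ) + 1) ^ (n - 2))⁻¹ + 1)
          * ((2 * K + 2) / a) ^ n / (2 * K + 2) ^ 2 := by
  set C := 2 * (n * (π / 2) ^ n) * ∑' i : ℕ, (((i : ℝ) + 1) ^ (n - 2))⁻¹ + 1
  set k : ℝ := 2 * K + 2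
  have hk : 0 < k := by positivity
  have hfactor : ∑ i ∈ range (2 * K + 1), ((2 * a * sin (vertexAngle K i)) ^ n)⁻¹
        - (2 / (2 * π) ^ n * ∑' i : ℕ, (((i : ℝ) + 1) ^ n)⁻¹) * (k / a) ^ n
      = ((2 * a) ^ n)⁻¹ * (∑ i ∈ range (2 * K + 1), (sin (vertexAngle K i) ^ n)⁻¹
        - 2 * (k / π) ^ n * ∑' i : ℕ, (((i : ℝ) + 1) ^ n)⁻¹) := by
    have hsum : ∑ i ∈ range (2 * K + 1), ((2 * a * sin (vertexAngle K i)) ^ n)⁻¹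
        = ((2 * a) ^ n)⁻¹ * ∑ i ∈ range (2 * K + 1), (sin (vertexAngle K i) ^ n)⁻¹ := by
      rw [mul_sum]
      exact sum_congr rfl fun i _ ↦ by rw [mul_pow, mul_inv]
    rw [hsum, mul_sub, mul_pow, mul_pow, div_pow, div_pow]
    field_simp
  obtain ⟨m, rfl⟩ : ∃ m, n = m + 2 := ⟨n - 2, by omega⟩
  rw [hfactor, abs_mul, abs_of_pos (by positivity)]
  calc ((2 * a) ^ (m + 2))⁻¹ * |_| ≤ ((2 * a) ^ (m + 2))⁻¹ * (C * k ^ (m + 2 - 2)) :=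
        mul_le_mul_of_nonneg_left (abs_sum_inv_sin_vertexAngle_pow_sub_le_mul hn K) (by positivity)
    _ ≤ (a ^ (m + 2))⁻¹ * (C * k ^ (m + 2 - 2)) := by
        gcongr
        exact le_mul_of_one_le_left ha.le (by norm_num)
    _ = C * (k / a) ^ (m + 2) / k ^ 2 := by
        rw [Nat.add_sub_cancel, div_pow, pow_add k m 2]
        field_simp

theorem stmt_5 (N : ℕ) (hN : 6 ≤ N) :
    ∃ C > 0, ∀ k : ℕ, 2 ≤ k → Even k → ∀ r h : ℝ, 0 < r → 0 ≤ h → h ≤ 1 / 2 →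
      |(∑ j ∈ Finset.Icc 2 k,
            (2 * r * Real.sqrt (1 - h ^ 2) * Real.sin (((j : ℝ) - 1) * π / k)) ^
              (-(N - 2 : ℝ))) -
          (2 / (2 * π) ^ (N - 2 : ℝ) * ∑' i : ℕ, ((i : ℝ) + 1) ^ (-(N - 2 : ℝ))) *
            ((k : ℝ) / (r * Real.sqrt (1 - h ^ 2))) ^ (N - 2 : ℝ)| ≤
        C * ((k : ℝ) / (r * Real.sqrt (1 - h ^ 2))) ^ (N - 2 : ℝ) / (k : ℝ) ^ 2 := by
  obtain ⟨n, rfl⟩ : ∃ n, N = n + 2 := ⟨N - 2, by omega⟩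
  refine ⟨2 * (n * (π / 2) ^ n) * ∑' i : ℕ, (((i : ℝ) + 1) ^ (n - 2))⁻¹ + 1, by positivity, ?_⟩
  intro k hk hke r h hr hh0 hh1
  obtain ⟨K, rfl⟩ : ∃ K, k = 2 * K + 2 := ⟨k / 2 - 1, by rw [Nat.even_iff] at hke; omega⟩
  have ha : 0 < r * √(1 - h ^ 2) := mul_pos hr (sqrt_pos.2 (by nlinarith))
  have hexp : ((n + 2 : ℕ) : ℝ) - 2 = n := by push_cast; ring
  have hsum := sum_Icc_two_eq_sum_range_vertexAngle K
    fun θ ↦ (2 * r * √(1 - h ^ 2) * sin θ) ^ (-(n : ℝ))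
  rw [hexp, hsum]
  simp only [rpow_neg_natCast, zpow_neg, zpow_natCast, rpow_natCast, mul_assoc 2 r]
  push_cast
  exact abs_sum_inv_chord_pow_sub_le (by omega) K ha
end

section
/- Let N ≥ 5, m satisfy: m ∈ [2, N−2) if N = 5 or 6, and m ∈ ((N−2)/2, N−2) if N ≥ 7. Then 6 + (N−3)/(N−1) < 3(N−2)/(N−2−m) + 2(N−2−m)/(N−2). -/
/-! With `c = N - 2` and `t = N - 2 - m`, the hypotheses on `m` say exactly `0 < t ≤ c / 2`
(for `N = 5, 6` because `m ≥ 2 ≥ c / 2`). On that range `3 c / t + 2 t / c ≥ 7`, with equality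
at `t = c / 2`, while the left-hand side is `6 + (N - 3) / (N - 1) < 7`. -/

theorem seven_le_three_mul_div_add_two_mul_div {c t : ℝ} (ht : 0 < t) (htc : 2 * t ≤ c) :
    7 ≤ 3 * c / t + 2 * t / c := by
  have hc : 0 < c := by linarith
  have hfactor : 3 * c / t + 2 * t / c - 7 = (c - 2 * t) * (3 * c - t) / (t * c) := by
    field_simp
    ring
  have hnonneg : 0 ≤ (c - 2 * t) * (3 * c - t) / (t * c) := by
    apply div_nonneg _ (by positivity)
    exact mul_nonneg (by linarith) (by linarith)
  linarith

theorem stmt_10 (N : ℕ) (hN : 5 ≤ N) (m : ℝ)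
    (hm56 : N = 5 ∨ N = 6 → 2 ≤ m ∧ m < (N : ℝ) - 2)
    (hm7 : 7 ≤ N → ((N : ℝ) - 2) / 2 < m ∧ m < (N : ℝ) - 2) :
    6 + ((N : ℝ) - 3) / ((N : ℝ) - 1) <
      3 * ((N : ℝ) - 2) / ((N : ℝ) - 2 - m) + 2 * ((N : ℝ) - 2 - m) / ((N : ℝ) - 2) := by
  have hN5 : (5 : ℝ) ≤ N := by exact_mod_cast hN
  have hm : ((N : ℝ) - 2) / 2 ≤ m ∧ m < (N : ℝ) - 2 := by
    rcases le_or_gt 7 N with h7 | h7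
    · obtain ⟨hlow, hup⟩ := hm7 h7
      exact ⟨hlow.le, hup⟩
    · have hN6 : (N : ℝ) ≤ 6 := by exact_mod_cast Nat.lt_succ_iff.mp h7
      obtain ⟨hlow, hup⟩ := hm56 (by omega)
      exact ⟨by linarith, hup⟩
  have hrhs := seven_le_three_mul_div_add_two_mul_div (c := (N : ℝ) - 2) (t := (N : ℝ) - 2 - m)
    (by linarith) (by linarith)
  have hlhs : ((N : ℝ) - 3) / ((N : ℝ) - 1) < 1 := (div_lt_one (by linarith)).mpr (by linarith)
  linarith
end
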